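/- arXiv:1810.05473 — 2 statements merged into one kernel-verified Lean document; each statement's English description precedes it below -/
import Mathlib

section
/- Let K be a positive integer, λ, ν, μ > 0, and define p(q,z) = p_Q(q) · C(q,z) · (μ/(ν+μ))^{q-z} · (ν/(ν+μ))^z for 0 ≤ z ≤ q ≤ K, where p_Q(q) = (1/q!)(λ/ν)^q · p_Q(0) and p_Q(0) = (Σ_{i=0}^K (1/i!)(λ/ν)^i)^{-1}. Then for all (q,z) with 0 < q < K, 0 < z < q, p satisfies the balance equation (qν + λ + μz) p(q,z) = λ p(q-1,z-1) + (z+1)ν p(q+1,z+1) + μ(z+1) p(q,z+1) + (q-z+1)ν p(q+1,z). -/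
/-!
Writing `a = λ/ν`, the weight `a^q/q! · C(q,z) · (μ/(ν+μ))^(q-z) · (ν/(ν+μ))^z` factors as
`x^z/z! · y^w/w!` with `w = q - z`, `x = λ/(ν+μ)` and `y = λμ/(ν(ν+μ))`: the numbers of uncharged and
charged EVs are independent Poisson-shaped weights. Each neighbouring weight is then the central one
times a ratio `x/(z+1)`, `z/x`, ..., and the balance equation reduces to `x(ν+μ) = λ` and `μx = νy`.
-/

section PoissonWeight

variable {𝕜 : Type*} [Field 𝕜] [CharZero 𝕜]

noncomputable def poissonWeight (x : 𝕜) (n : ℕ) : 𝕜 := x ^ n / n.factorial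

theorem succ_mul_poissonWeight_succ (x : 𝕜) (n : ℕ) :
    ((n : 𝕜) + 1) * poissonWeight x (n + 1) = x * poissonWeight x n := by
  unfold poissonWeight
  rw [Nat.factorial_succ]
  push_cast
  field_simp
  ring

theorem choose_mul_pow_div_factorial (a b d : 𝕜) (z w : ℕ) :
    ((z + w).choose z : 𝕜) * (a ^ (z + w) / (z + w).factorial) * b ^ w * d ^ z
      = poissonWeight (a * d) z * poissonWeight (a * b) w := by
  have hfact : ((z + w).factorial : 𝕜) = (z + w).choose z * z.factorial * w.factorial := by
    rw [add_comm z w, ← Nat.add_choose_mul_factorial_mul_factorial w z]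
    push_cast
    ring
  have hchoose : ((z + w).choose z : 𝕜) ≠ 0 := by
    exact_mod_cast (Nat.choose_pos (Nat.le_add_right z w)).ne'
  unfold poissonWeight
  rw [hfact]
  field_simp
  ring

/-- Here `z = s + 1` EVs are uncharged and `w = m + 1` are charged. -/
theorem product_poissonWeight_balance (lam ν μ x y : 𝕜) (hx : x * (ν + μ) = lam)
    (hxy : μ * x = ν * y) (s m : ℕ) :
    ((s + 1 + (m + 1) : 𝕜) * ν + lam + μ * (s + 1))
        * (poissonWeight x (s + 1) * poissonWeight y (m + 1))
      = lam * (poissonWeight x s * poissonWeight y (m + 1))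
        + ((s + 1 : 𝕜) + 1) * ν * (poissonWeight x (s + 2) * poissonWeight y (m + 1))
        + μ * ((s + 1 : 𝕜) + 1) * (poissonWeight x (s + 2) * poissonWeight y m)
        + ((m + 1 : 𝕜) + 1) * ν * (poissonWeight x (s + 1) * poissonWeight y (m + 2)) := by
  have hu₁ := succ_mul_poissonWeight_succ x s
  have hu₂ : ((s : 𝕜) + 2) * poissonWeight x (s + 2) = x * poissonWeight x (s + 1) := by
    simpa [add_assoc, one_add_one_eq_two] using succ_mul_poissonWeight_succ x (s + 1)
  have hv₁ := succ_mul_poissonWeight_succ y m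
  have hv₂ : ((m : 𝕜) + 2) * poissonWeight y (m + 2) = y * poissonWeight y (m + 1) := by
    simpa [add_assoc, one_add_one_eq_two] using succ_mul_poissonWeight_succ y (m + 1)
  set u₀ := poissonWeight x s
  set u₁ := poissonWeight x (s + 1)
  set v₀ := poissonWeight y m
  set v₁ := poissonWeight y (m + 1)
  linear_combination (u₀ * v₁ - u₁ * v₁) * hx + (u₁ * v₁ - u₁ * v₀) * hxy
    + (ν + μ) * v₁ * hu₁ - (ν * v₁ + μ * v₀) * hu₂ + ν * u₁ * hv₁ - ν * u₁ * hv₂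

end PoissonWeight

theorem stmt0_general (K : ℕ) (lam ν μ : ℝ)
    (hν : 0 < ν) (hμ : 0 < μ)
    (pQ : ℕ → ℝ)
    (hpQ : ∀ q : ℕ, pQ q = (1 / (q.factorial : ℝ)) * (lam / ν) ^ q * pQ 0)
    (p : ℕ → ℕ → ℝ)
    (hp : ∀ q z : ℕ, p q z =
      pQ q * (q.choose z : ℝ) * (μ / (ν + μ)) ^ (q - z) * (ν / (ν + μ)) ^ z) :
    ∀ q z : ℕ, 0 < q → q < K → 0 < z → z < q →
      ((q : ℝ) * ν + lam + μ * z) * p q z =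
        lam * p (q - 1) (z - 1) + ((z : ℝ) + 1) * ν * p (q + 1) (z + 1)
          + μ * ((z : ℝ) + 1) * p q (z + 1) + ((q : ℝ) - z + 1) * ν * p (q + 1) z := by
  intro q z _ _ hz hzq
  set x := lam / ν * (ν / (ν + μ))
  set y := lam / ν * (μ / (ν + μ))
  have hproduct : ∀ z w : ℕ, p (z + w) z = pQ 0 * (poissonWeight x z * poissonWeight y w) := by
    intro z w
    rw [hp, hpQ, Nat.add_sub_cancel_left, ← choose_mul_pow_div_factorial]
    ring
  have hx : x * (ν + μ) = lam := by
    simp only [x]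
    field_simp
  have hxy : μ * x = ν * y := by ring
  obtain ⟨s, hs⟩ : ∃ s, z = s + 1 := ⟨z - 1, by omega⟩
  obtain ⟨m, hm⟩ : ∃ m, q = s + 1 + (m + 1) := ⟨q - z - 1, by omega⟩
  have e₀ : p q z = pQ 0 * (poissonWeight x (s + 1) * poissonWeight y (m + 1)) := by
    rw [hm, hs, hproduct]
  have e₁ : p (q - 1) (z - 1) = pQ 0 * (poissonWeight x s * poissonWeight y (m + 1)) := by
    rw [show q - 1 = s + (m + 1) by omega, show z - 1 = s by omega, hproduct]
  have e₂ : p (q + 1) (z + 1) = pQ 0 * (poissonWeight x (s + 2) * poissonWeight y (m + 1)) := by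
    rw [show q + 1 = s + 2 + (m + 1) by omega, show z + 1 = s + 2 by omega, hproduct]
  have e₃ : p q (z + 1) = pQ 0 * (poissonWeight x (s + 2) * poissonWeight y m) := by
    rw [show q = s + 2 + m by omega, show z + 1 = s + 2 by omega, hproduct]
  have e₄ : p (q + 1) z = pQ 0 * (poissonWeight x (s + 1) * poissonWeight y (m + 2)) := by
    rw [show q + 1 = s + 1 + (m + 2) by omega, hs, hproduct]
  rw [e₀, e₁, e₂, e₃, e₄, hm, hs]
  push_cast
  linear_combination pQ 0 * product_poissonWeight_balance lam ν μ x y hx hxy s m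

theorem stmt0 (K : ℕ) (hK : 0 < K) (lam ν μ : ℝ)
    (hlam : 0 < lam) (hν : 0 < ν) (hμ : 0 < μ)
    (pQ : ℕ → ℝ)
    (hpQ0 : pQ 0 = (∑ i ∈ Finset.range (K + 1), (1 / (i.factorial : ℝ)) * (lam / ν) ^ i)⁻¹)
    (hpQ : ∀ q : ℕ, pQ q = (1 / (q.factorial : ℝ)) * (lam / ν) ^ q * pQ 0)
    (p : ℕ → ℕ → ℝ)
    (hp : ∀ q z : ℕ, p q z =
      pQ q * (q.choose z : ℝ) * (μ / (ν + μ)) ^ (q - z) * (ν / (ν + μ)) ^ z) :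
    ∀ q z : ℕ, 0 < q → q < K → 0 < z → z < q →
      ((q : ℝ) * ν + lam + μ * z) * p q z =
        lam * p (q - 1) (z - 1) + ((z : ℝ) + 1) * ν * p (q + 1) (z + 1)
          + μ * ((z : ℝ) + 1) * p q (z + 1) + ((q : ℝ) - z + 1) * ν * p (q + 1) z :=
  stmt0_general K lam ν μ hν hμ pQ hpQ p hp
end

section
/- Let λ, ν, μ, M, K > 0 with M ≤ K, let z* be the unique invariant point of the ODE z'(t) = (λ ∧ νK) − νz(t) − μ(z(t) ∧ M), and let z(·) be the solution with z(0) ∈ [0,K]. Then z(t) → z* as t → ∞, and the convergence is exponentially fast: there exists C > 0 such that |z(t) − z*| ≤ C e^{−νt} for all t sufficiently large. -/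
open Filter Real

/-! Since `x ↦ min x M` is monotone, the drift `F` of the fluid model satisfies the one-sided
estimate `(x - z*) F(x) ≤ -ν (x - z*)²` around its zero `z*`. Hence the Lyapunov function
`(z t - z*)² e^{2νt}` is nonincreasing along solutions, which gives
`|z t - z*| ≤ |z 0 - z*| e^{-νt}` for every initial value. -/

theorem abs_sub_le_mul_exp_of_hasDerivAt {f z : ℝ → ℝ} {ν x₀ : ℝ}
    (hf : ∀ x, (x - x₀) * f x ≤ -ν * (x - x₀) ^ 2)
    (hz : ∀ t, 0 ≤ t → HasDerivAt z (f (z t)) t) {t : ℝ} (ht : 0 ≤ t) :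
    |z t - x₀| ≤ |z 0 - x₀| * exp (-ν * t) := by
  set V : ℝ → ℝ := fun s => (z s - x₀) ^ 2 * exp (2 * ν * s)
  set V' : ℝ → ℝ := fun s => 2 * ((z s - x₀) * f (z s) + ν * (z s - x₀) ^ 2) * exp (2 * ν * s)
  have hV : ∀ s, 0 ≤ s → HasDerivAt V (V' s) s := by
    intro s hs
    refine ((((hz s hs).sub_const x₀).fun_pow 2).mul
      ((hasDerivAt_id s).const_mul (2 * ν)).exp).congr_deriv ?_
    simp only [V', id, Nat.cast_ofNat]
    ring
  have hV_anti : AntitoneOn V (Set.Ici 0) := by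
    refine antitoneOn_of_hasDerivWithinAt_nonpos (convex_Ici 0) (f' := V')
      (fun s hs => (hV s hs).continuousAt.continuousWithinAt) (fun s hs => ?_) (fun s _ => ?_)
    · rw [interior_Ici] at hs
      exact (hV s hs.le).hasDerivWithinAt
    · exact mul_nonpos_of_nonpos_of_nonneg (by linarith [hf (z s)]) (exp_pos _).le
  have hVt : (|z t - x₀| * exp (ν * t)) ^ 2 ≤ |z 0 - x₀| ^ 2 := by
    simpa [V, mul_pow, sq_abs, ← exp_nat_mul, mul_assoc, mul_left_comm] using
      hV_anti Set.self_mem_Ici ht ht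
  have hle := (pow_le_pow_iff_left₀ (by positivity) (abs_nonneg _) two_ne_zero).1 hVt
  calc |z t - x₀| = |z t - x₀| * exp (ν * t) * exp (-ν * t) := by
        rw [mul_assoc, ← exp_add]; simp
    _ ≤ |z 0 - x₀| * exp (-ν * t) := by gcongr

theorem tendsto_of_abs_sub_le_mul_exp {z : ℝ → ℝ} {x₀ C ν : ℝ} (hν : 0 < ν)
    (hz : ∀ᶠ t in atTop, |z t - x₀| ≤ C * exp (-ν * t)) : Tendsto z atTop (nhds x₀) := by
  have hexp : Tendsto (fun t => C * exp (-ν * t)) atTop (nhds 0) := by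
    simpa using ((tendsto_exp_atBot.comp
      (tendsto_id.const_mul_atTop_of_neg (neg_neg_of_pos hν))).const_mul C)
  exact tendsto_sub_nhds_zero_iff.1 (squeeze_zero_norm' hz hexp)

def fluidDrift (A ν μ M x : ℝ) : ℝ := A - ν * x - μ * min x M

noncomputable def fluidFixedPoint (A ν μ M : ℝ) : ℝ :=
  if A / (ν + μ) ≤ M then A / (ν + μ) else (A - μ * M) / ν

theorem fluidDrift_fluidFixedPoint {A ν μ M : ℝ} (hν : 0 < ν) (hμ : 0 ≤ μ) :
    fluidDrift A ν μ M (fluidFixedPoint A ν μ M) = 0 := by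
  have hνμ : 0 < ν + μ := by linarith
  unfold fluidDrift fluidFixedPoint
  split_ifs with h
  · rw [min_eq_left h]
    field_simp
    ring
  · rw [not_le, lt_div_iff₀ hνμ] at h
    rw [min_eq_right ((le_div_iff₀ hν).2 (by linarith))]
    field_simp
    ring

theorem sub_mul_fluidDrift_le {A ν μ M x₀ : ℝ} (hμ : 0 ≤ μ) (h₀ : fluidDrift A ν μ M x₀ = 0)
    (x : ℝ) : (x - x₀) * fluidDrift A ν μ M x ≤ -ν * (x - x₀) ^ 2 := by
  have hmono : 0 ≤ (x - x₀) * (min x M - min x₀ M) := by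
    rcases le_total x x₀ with h | h
    · exact mul_nonneg_of_nonpos_of_nonpos (by linarith) (by linarith [min_le_min_right M h])
    · exact mul_nonneg (by linarith) (by linarith [min_le_min_right M h])
  have hdrift : fluidDrift A ν μ M x = -ν * (x - x₀) - μ * (min x M - min x₀ M) := by
    unfold fluidDrift at *
    linarith
  rw [hdrift]
  nlinarith [mul_nonneg hμ hmono]

theorem stmt10_general (lam ν μ M K : ℝ)
    (hν : 0 < ν) (hμ : 0 < μ)
    (z : ℝ → ℝ)
    (hode : ∀ t : ℝ, 0 ≤ t →
      HasDerivAt z (min lam (ν * K) - ν * z t - μ * min (z t) M) t) :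
    let zs : ℝ := if min lam (ν * K) / (ν + μ) ≤ M
      then min lam (ν * K) / (ν + μ) else (min lam (ν * K) - μ * M) / ν
    Tendsto z atTop (nhds zs) ∧
      ∃ C : ℝ, 0 < C ∧ ∃ T : ℝ, ∀ t : ℝ, T ≤ t → |z t - zs| ≤ C * Real.exp (-ν * t) := by
  intro zs
  have hdrift : ∀ x, (x - zs) * fluidDrift (min lam (ν * K)) ν μ M x ≤ -ν * (x - zs) ^ 2 :=
    sub_mul_fluidDrift_le hμ.le (fluidDrift_fluidFixedPoint hν hμ.le)
  have hdecay : ∀ t, 0 ≤ t → |z t - zs| ≤ (|z 0 - zs| + 1) * exp (-ν * t) := fun t ht =>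
    (abs_sub_le_mul_exp_of_hasDerivAt hdrift hode ht).trans
      (by gcongr; linarith)
  exact ⟨tendsto_of_abs_sub_le_mul_exp hν (eventually_ge_atTop 0 |>.mono hdecay),
    _, by positivity, 0, hdecay⟩

theorem stmt10 (lam ν μ M K : ℝ)
    (hlam : 0 < lam) (hν : 0 < ν) (hμ : 0 < μ) (hM : 0 < M) (hK : 0 < K) (hMK : M ≤ K)
    (z : ℝ → ℝ)
    (hode : ∀ t : ℝ, 0 ≤ t →
      HasDerivAt z (min lam (ν * K) - ν * z t - μ * min (z t) M) t)
    (h0 : z 0 ∈ Set.Icc (0 : ℝ) K) :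
    let zs : ℝ := if min lam (ν * K) / (ν + μ) ≤ M
      then min lam (ν * K) / (ν + μ) else (min lam (ν * K) - μ * M) / ν
    Tendsto z atTop (nhds zs) ∧
      ∃ C : ℝ, 0 < C ∧ ∃ T : ℝ, ∀ t : ℝ, T ≤ t → |z t - zs| ≤ C * Real.exp (-ν * t) :=
  stmt10_general lam ν μ M K hν hμ z hode
end
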